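/- There is an infinite computable binary tree T ⊆ 2^{<ℕ} such that for every e, there is a bound t with the property: if the e-th computably enumerable set W_e has at least e+3 elements, then W_e is not homogeneous for any string in T of length greater than t. In particular, no infinite c.e. set is homogeneous for a path through T. -/

import Mathlib

/-- The initial segment of length `n` of an infinite binary sequence `p`. -/
def initSeg (p : ℕ → Bool) (n : ℕ) : List Bool := (List.range n).map p

/-- A tree of finite binary strings: a set closed under initial segments. -/
def IsTree (T : Set (List Bool)) : Prop := ∀ σ ∈ T, ∀ τ : List Bool, τ <+: σ → τ ∈ T

/-- `H` is homogeneous for the string `σ` with color `c`. -/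
def HomogFor (H : Set ℕ) (c : Bool) (σ : List Bool) : Prop :=
  ∀ x ∈ H, x < σ.length → σ.getD x false = c

/-- `H` is homogeneous (with color `c`) for arbitrarily long strings of `T`. -/
def HomogPathC (H : Set ℕ) (c : Bool) (T : Set (List Bool)) : Prop :=
  ∀ t : ℕ, ∃ σ ∈ T, t ≤ σ.length ∧ HomogFor H c σ
/-- The `e`-th partial computable function `Φ_e`. -/
def Phi (e : ℕ) : ℕ →. ℕ := (Denumerable.ofNat Nat.Partrec.Code e).eval

/-- `W_e`, the domain of the `e`-th partial computable function. -/
def WSet (e : ℕ) : Set ℕ := {x | (Phi e x).Dom}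

/-!
A string `σ` is put in the tree when, for every `e < |σ|` and every stage `s ≤ |σ|` at which the
approximation `W_{e,s}` already has `e + 3` elements, `σ` is not constant on `W_{e,s}`; only
computations of bounded length are consulted, so membership is primitive recursive.
Every level is nonempty by Erdős's counting argument for property B: at most `2 · 2^(n - k)`
strings of length `n` are constant on a given `k`-element set, and `∑ₑ 2 · 2^-(e + 3) < 1`.
If `W_e` has `e + 3` elements, they are all enumerated by some stage `s`, so no string of the
tree longer than `max e s` is homogeneous for `W_e`.
-/

open Finset

theorem Monotone.exists_forall_le_of_exists {α : Type*} [Preorder α] {f : ℕ → α}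
    (hf : Monotone f) {P : ℕ → Prop} (h : ∃ m, P m) : ∃ m₀, P m₀ ∧ ∀ m, P m → f m₀ ≤ f m := by
  classical
  exact ⟨Nat.find h, Nat.find_spec h, fun m hm => hf (Nat.find_min' h hm)⟩

theorem Finset.exists_subset_splitting_of_sum_lt_one {α ι : Type*} [DecidableEq α]
    (U : Finset α) (S : Finset ι) (D : ι → Finset α) (hDU : ∀ i ∈ S, D i ⊆ U)
    (hsum : ∑ i ∈ S, (2 : ℝ) / 2 ^ #(D i) < 1) :
    ∃ s ⊆ U, ∀ i ∈ S, ¬ D i ⊆ s ∧ ¬ Disjoint (D i) s := by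
  -- `s ⊆ U` fails for `i` iff it lies in `Icc (D i) U` (contains `D i`) or in `(U \ D i).powerset`
  set bad := S.biUnion fun i => Icc (D i) U ∪ (U \ D i).powerset
  have hbad : (#bad : ℝ) < #U.powerset := by
    calc (#bad : ℝ) ≤ ∑ i ∈ S, ((2 : ℝ) ^ (#U - #(D i)) + 2 ^ (#U - #(D i))) := by
          refine (Nat.cast_le.2 card_biUnion_le).trans ?_
          push_cast
          refine sum_le_sum fun i hi => ?_
          refine (Nat.cast_le.2 (card_union_le _ _)).trans ?_
          rw [card_Icc_finset (hDU i hi), card_powerset, card_sdiff_of_subset (hDU i hi)]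
          push_cast; rfl
      _ = 2 ^ #U * ∑ i ∈ S, (2 : ℝ) / 2 ^ #(D i) := by
          rw [mul_sum]
          refine sum_congr rfl fun i hi => ?_
          rw [pow_sub₀ _ two_ne_zero (card_le_card (hDU i hi))]
          ring
      _ < #U.powerset := by
          rw [card_powerset]; push_cast
          exact mul_lt_of_lt_one_right (by positivity) hsum
  obtain ⟨s, hsU, hsbad⟩ := exists_mem_notMem_of_card_lt_card (Nat.cast_lt.1 hbad)
  rw [mem_powerset] at hsU
  refine ⟨s, hsU, fun i hi => ⟨fun hDs => hsbad ?_, fun hdisj => hsbad ?_⟩⟩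
  · exact mem_biUnion.2 ⟨i, hi, mem_union_left _ (mem_Icc.2 ⟨hDs, hsU⟩)⟩
  · exact mem_biUnion.2
      ⟨i, hi, mem_union_right _ (mem_powerset.2 (subset_sdiff.2 ⟨hsU, hdisj.symm⟩))⟩

theorem sum_two_div_two_pow_lt_one {S : Finset ℕ} {k : ℕ → ℕ} (hk : ∀ i ∈ S, i + 2 ≤ k i) :
    ∑ i ∈ S, (2 : ℝ) / 2 ^ k i < 1 := by
  have hgeom (N : ℕ) : ∑ i ∈ range N, (1 / 2 : ℝ) / 2 ^ i = 1 - 1 / 2 ^ N := by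
    induction N with
    | zero => simp
    | succ N ih => rw [sum_range_succ, ih]; field_simp; ring
  obtain ⟨N, hN⟩ : ∃ N, S ⊆ range N :=
    ⟨S.sup id + 1, fun i hi => mem_range.2 (Nat.lt_succ_of_le (le_sup (f := id) hi))⟩
  calc ∑ i ∈ S, (2 : ℝ) / 2 ^ k i ≤ ∑ i ∈ S, (1 / 2 : ℝ) / 2 ^ i := by
        refine sum_le_sum fun i hi => ?_
        rw [div_le_div_iff₀ (by positivity) (by positivity)]
        calc (2 : ℝ) * 2 ^ i = 1 / 2 * 2 ^ (i + 2) := by ring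
          _ ≤ 1 / 2 * 2 ^ k i := by gcongr; norm_num; exact hk i hi
    _ ≤ ∑ i ∈ range N, (1 / 2 : ℝ) / 2 ^ i :=
        sum_le_sum_of_subset_of_nonneg hN fun _ _ _ => by positivity
    _ < 1 := by rw [hgeom]; linarith [show (0 : ℝ) < 1 / 2 ^ N by positivity]

theorem length_initSeg (p : ℕ → Bool) (n : ℕ) : (initSeg p n).length = n := by
  simp [initSeg]

theorem getD_initSeg {p : ℕ → Bool} {n x : ℕ} (hx : x < n) : (initSeg p n).getD x false = p x := by
  simp [initSeg, hx]

theorem HomogFor.mono {H K : Set ℕ} {c : Bool} {σ : List Bool} (h : HomogFor H c σ)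
    (hK : K ⊆ H) : HomogFor K c σ :=
  fun x hx => h x (hK hx)

theorem not_exists_homogFor_iff {H : Set ℕ} {σ : List Bool} (hH : ∀ x ∈ H, x < σ.length) :
    (¬ ∃ c, HomogFor H c σ) ↔ ∃ x ∈ H, ∃ y ∈ H, σ.getD x false ≠ σ.getD y false := by
  constructor
  · intro h
    by_contra! hall
    rcases H.eq_empty_or_nonempty with rfl | ⟨x₀, hx₀⟩
    · exact h ⟨false, fun x hx => hx.elim⟩
    · exact h ⟨σ.getD x₀ false, fun x hx _ => hall x hx x₀ hx₀⟩
  · rintro ⟨x, hx, y, hy, hxy⟩ ⟨c, hc⟩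
    exact hxy ((hc x hx (hH x hx)).trans (hc y hy (hH y hy)).symm)

def WStage (e s : ℕ) : Finset ℕ :=
  (range s).filter fun x =>
    (Nat.Partrec.Code.evaln s (Denumerable.ofNat Nat.Partrec.Code e) x).isSome

theorem mem_WStage {e s x : ℕ} : x ∈ WStage e s ↔
    x < s ∧ (Nat.Partrec.Code.evaln s (Denumerable.ofNat Nat.Partrec.Code e) x).isSome := by
  simp [WStage]

theorem WStage_subset_range (e s : ℕ) : WStage e s ⊆ range s := filter_subset _ _

theorem WStage_mono (e : ℕ) : Monotone (WStage e) := by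
  intro s s' hss' x hx
  obtain ⟨hxs, hhalt⟩ := mem_WStage.1 hx
  obtain ⟨y, hy⟩ := Option.isSome_iff_exists.1 hhalt
  exact mem_WStage.2
    ⟨hxs.trans_le hss', Option.isSome_iff_exists.2 ⟨y, Nat.Partrec.Code.evaln_mono hss' hy⟩⟩

theorem coe_WStage_subset_WSet (e s : ℕ) : (WStage e s : Set ℕ) ⊆ WSet e := by
  intro x hx
  obtain ⟨y, hy⟩ := Option.isSome_iff_exists.1 (mem_WStage.1 hx).2
  exact Part.dom_iff_mem.2 ⟨y, Nat.Partrec.Code.evaln_sound hy⟩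

theorem WSet_subset_iUnion_WStage (e : ℕ) : WSet e ⊆ ⋃ s, (WStage e s : Set ℕ) := by
  intro x hx
  obtain ⟨y, hy⟩ := Part.dom_iff_mem.1 hx
  obtain ⟨s, hs⟩ := Nat.Partrec.Code.evaln_complete.1 hy
  exact Set.mem_iUnion.2
    ⟨s, mem_WStage.2 ⟨Nat.Partrec.Code.evaln_bound hs, Option.isSome_iff_exists.2 ⟨y, hs⟩⟩⟩

theorem exists_WStage_superset {e : ℕ} {F : Finset ℕ} (hF : (F : Set ℕ) ⊆ WSet e) :
    ∃ s, F ⊆ WStage e s := by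
  have hdir : Directed (· ⊆ ·) fun s => (WStage e s : Set ℕ) :=
    Monotone.directed_le fun _ _ h => coe_subset.2 (WStage_mono e h)
  obtain ⟨s, hs⟩ :=
    hdir.exists_mem_subset_of_finset_subset_biUnion (hF.trans (WSet_subset_iUnion_WStage e))
  exact ⟨s, coe_subset.1 hs⟩

def jockuschTree : Set (List Bool) :=
  {σ | ∀ e < σ.length, ∀ s ≤ σ.length, e + 3 ≤ #(WStage e s) → ¬ ∃ c, HomogFor (WStage e s) c σ}

theorem mem_jockuschTree_iff {σ : List Bool} : σ ∈ jockuschTree ↔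
    ∀ e < σ.length, ∀ s ≤ σ.length, e + 3 ≤ #(WStage e s) →
      ∃ x ∈ WStage e s, ∃ y ∈ WStage e s, σ.getD x false ≠ σ.getD y false := by
  refine forall₂_congr fun e _ => forall₂_congr fun s hs => imp_congr_right fun _ => ?_
  exact not_exists_homogFor_iff fun x hx => (mem_WStage.1 hx).1.trans_le hs

theorem isTree_jockuschTree : IsTree jockuschTree := by
  rintro _ hσ τ ⟨ρ, rfl⟩
  rw [mem_jockuschTree_iff] at hσ ⊢
  intro e he s hs hcard
  have hlen : τ.length ≤ (τ ++ ρ).length := by simp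
  obtain ⟨x, hx, y, hy, hxy⟩ := hσ e (he.trans_le hlen) s (hs.trans hlen) hcard
  refine ⟨x, hx, y, hy, ?_⟩
  rwa [List.getD_append _ _ _ _ ((mem_WStage.1 hx).1.trans_le hs),
    List.getD_append _ _ _ _ ((mem_WStage.1 hy).1.trans_le hs)] at hxy

theorem exists_mem_jockuschTree_length_eq (n : ℕ) : ∃ σ ∈ jockuschTree, σ.length = n := by
  classical
  set S := (range n).filter fun e => ∃ s ≤ n, e + 3 ≤ #(WStage e s)
  -- it suffices to split the first stage set of `e` with `e + 3` elements: later ones contain it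
  have hmin : ∀ e ∈ S, ∃ s₀, e + 3 ≤ #(WStage e s₀) ∧
      ∀ s, e + 3 ≤ #(WStage e s) → WStage e s₀ ⊆ WStage e s := fun e he => by
    obtain ⟨s, -, hs⟩ := (mem_filter.1 he).2
    exact (WStage_mono e).exists_forall_le_of_exists ⟨s, hs⟩
  choose! s₀ hs₀card hs₀min using hmin
  have hsub : ∀ e ∈ S, WStage e (s₀ e) ⊆ range n := fun e he => by
    obtain ⟨s, hsn, hs⟩ := (mem_filter.1 he).2
    exact (hs₀min e he s hs).trans ((WStage_subset_range e s).trans (range_subset_range.2 hsn))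
  obtain ⟨A, -, hA⟩ := exists_subset_splitting_of_sum_lt_one (range n) S
    (fun e => WStage e (s₀ e)) hsub (sum_two_div_two_pow_lt_one fun e he => by
      have := hs₀card e he; omega)
  refine ⟨initSeg (· ∈ A) n, ?_, length_initSeg _ _⟩
  rw [mem_jockuschTree_iff, length_initSeg]
  intro e he s hs hcard
  have heS : e ∈ S := mem_filter.2 ⟨mem_range.2 he, s, hs, hcard⟩
  obtain ⟨x, hxD, hxA⟩ := not_subset.1 (hA e heS).1
  obtain ⟨y, hyD, hyA⟩ := not_disjoint_iff.1 (hA e heS).2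
  have hD := hs₀min e heS s hcard
  refine ⟨x, hD hxD, y, hD hyD, ?_⟩
  rw [getD_initSeg (mem_range.1 (hsub e heS hxD)), getD_initSeg (mem_range.1 (hsub e heS hyD))]
  simp [hxA, hyA]

theorem exists_bound_not_homogFor {e : ℕ} {F : Finset ℕ} (hF : (F : Set ℕ) ⊆ WSet e)
    (hcard : e + 3 ≤ #F) :
    ∃ t, ∀ σ ∈ jockuschTree, t < σ.length → ¬ ∃ c, HomogFor (WSet e) c σ := by
  obtain ⟨s, hs⟩ := exists_WStage_superset hF
  refine ⟨max e s, fun σ hσ ht ⟨c, hc⟩ => ?_⟩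
  exact hσ e (by omega) s (by omega) (hcard.trans (card_le_card hs))
    ⟨c, hc.mono (coe_WStage_subset_WSet e s)⟩

section Computability

open Primrec

def WStageList (e s : ℕ) : List ℕ :=
  (List.range s).filter fun x =>
    (Nat.Partrec.Code.evaln s (Denumerable.ofNat Nat.Partrec.Code e) x).isSome

theorem mem_WStageList {e s x : ℕ} : x ∈ WStageList e s ↔ x ∈ WStage e s := by
  simp [WStageList, WStage]

theorem length_WStageList (e s : ℕ) : (WStageList e s).length = #(WStage e s) := by
  simp [WStageList, WStage, card_def, Multiset.range]

theorem primrec₂_WStageList : Primrec₂ WStageList := by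
  have hhalts : PrimrecRel fun (x : ℕ) (es : ℕ × ℕ) =>
      (Nat.Partrec.Code.evaln es.2 (Denumerable.ofNat Nat.Partrec.Code es.1) x).isSome = true :=
    Primrec.eq.comp (option_isSome.comp (Nat.Partrec.Code.primrec_evaln.comp
      (((snd.comp snd).pair ((Primrec.ofNat _).comp (fst.comp snd))).pair fst))) (const true)
  exact ((PrimrecRel.listFilter hhalts).comp (list_range.comp snd) Primrec.id).of_eq
    fun es => by simp [WStageList]

theorem primrecPred_mem_jockuschTree : PrimrecPred (· ∈ jockuschTree) := by
  -- the parameters are nested pairs `q = (c, s, e, σ)`, `p = (s, e, σ)` and `eσ = (e, σ)`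
  have hpoint : PrimrecRel fun (x : ℕ) (q : Bool × ℕ × ℕ × List Bool) =>
      x < q.2.2.2.length → q.2.2.2.getD x false = q.1 :=
    (PrimrecPred.or (.not (nat_lt.comp fst (list_length.comp (snd.comp (snd.comp (snd.comp snd))))))
      (Primrec.eq.comp ((list_getD false).comp (snd.comp (snd.comp (snd.comp snd))) fst)
        (fst.comp snd))).of_eq fun _ => imp_iff_not_or.symm
  have hhomog : PrimrecRel fun (c : Bool) (p : ℕ × ℕ × List Bool) =>
      ∀ x ∈ WStageList p.2.1 p.1, x < p.2.2.length → p.2.2.getD x false = c :=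
    (PrimrecRel.forall_mem_list hpoint).comp
      (primrec₂_WStageList.comp (fst.comp (snd.comp snd)) (fst.comp snd)) Primrec.id
  have hnode : PrimrecRel fun (s : ℕ) (eσ : ℕ × List Bool) =>
      eσ.1 + 3 ≤ (WStageList eσ.1 s).length → ¬ ∃ c ∈ [false, true],
        ∀ x ∈ WStageList eσ.1 s, x < eσ.2.length → eσ.2.getD x false = c :=
    (PrimrecPred.or (.not (nat_le.comp (nat_add.comp (fst.comp snd) (const 3))
        (list_length.comp (primrec₂_WStageList.comp (fst.comp snd) fst))))
      (.not ((PrimrecRel.exists_mem_list hhomog).comp (const _) Primrec.id))).of_eq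
      fun _ => imp_iff_not_or.symm
  have hstages : PrimrecRel fun (e : ℕ) (σ : List Bool) => ∀ s ∈ List.range (σ.length + 1),
      e + 3 ≤ (WStageList e s).length → ¬ ∃ c ∈ [false, true],
        ∀ x ∈ WStageList e s, x < σ.length → σ.getD x false = c :=
    (PrimrecRel.forall_mem_list hnode).comp
      (list_range.comp (succ.comp (list_length.comp snd))) Primrec.id
  refine ((PrimrecRel.forall_mem_list hstages).comp (list_range.comp list_length)
    Primrec.id).of_eq fun σ => ?_
  simp only [jockuschTree, HomogFor, Set.mem_ofPred_eq, List.mem_range, Nat.lt_succ_iff,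
    length_WStageList, mem_WStageList, id_eq, Bool.exists_bool, List.mem_cons, true_or, or_true,
    true_and, mem_coe]

end Computability

/-- Jockusch's tree: an infinite computable binary tree `T` such that for each `e`
there is a bound `t` with: if `W_e` has at least `e + 3` elements then `W_e` is not
homogeneous for any string in `T` of length greater than `t`; in particular no
infinite c.e. set is homogeneous for a path through `T`. -/
theorem stmt14 : ∃ T : List Bool → Bool, Computable T ∧
    IsTree {σ | T σ = true} ∧
    (∀ n, ∃ σ, T σ = true ∧ σ.length = n) ∧
    (∀ e, ∃ t, (∃ F : Finset ℕ, ↑F ⊆ WSet e ∧ F.card = e + 3) →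
      ∀ σ, T σ = true → t < σ.length → ¬ ∃ c : Bool, HomogFor (WSet e) c σ) ∧
    (∀ e, (WSet e).Infinite → ¬ ∃ c : Bool, HomogPathC (WSet e) c {σ | T σ = true}) := by
  classical
  refine ⟨fun σ => decide (σ ∈ jockuschTree), primrecPred_mem_jockuschTree.decide.to_comp,
    by simpa using isTree_jockuschTree, by simpa using exists_mem_jockuschTree_length_eq,
    fun e => ?_, fun e hinf ⟨c, hc⟩ => ?_⟩
  · by_cases hF : ∃ F : Finset ℕ, ↑F ⊆ WSet e ∧ F.card = e + 3
    · obtain ⟨F, hFW, hFcard⟩ := hF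
      obtain ⟨t, ht⟩ := exists_bound_not_homogFor hFW hFcard.ge
      exact ⟨t, fun _ σ hσ => ht σ (by simpa using hσ)⟩
    · exact ⟨0, fun h => (hF h).elim⟩
  · obtain ⟨F, hFW, hFcard⟩ := hinf.exists_subset_card_eq (e + 3)
    obtain ⟨t, ht⟩ := exists_bound_not_homogFor hFW hFcard.ge
    obtain ⟨σ, hσ, hlen, hhom⟩ := hc (t + 1)
    exact ht σ (by simpa using hσ) hlen ⟨c, hhom⟩
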